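/- Let G be a finite group and A a commutative unital ring. Then there is an isomorphism of A-modules Der(A[G]) ≅ Inn(A[G]) ⊕ (⨁_{[u]} Hom_Ab(Z(u), A)), where the direct sum ranges over all conjugacy classes of G with one representative u chosen in each class, and Z(u) is the centralizer of u in G. -/

import Mathlib

open MonoidAlgebra

/-- The A-module of derivations of the group ring A[G]. -/
def derSub (A G : Type) [CommRing A] [Group G] :
    Submodule A (MonoidAlgebra A G →ₗ[A] MonoidAlgebra A G) where
  carrier := {d | ∀ x y, d (x * y) = d x * y + x * d y}
  add_mem' := by
    intro d e hd he x y
    simp only [LinearMap.add_apply, hd x y, he x y, add_mul, mul_add]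
    abel
  zero_mem' := by intro x y; simp
  smul_mem' := by
    intro c d hd x y
    simp only [LinearMap.smul_apply, hd x y, smul_add, smul_mul_assoc, mul_smul_comm]

/-- The A-submodule of inner derivations, inside the derivations. -/
def innSub (A G : Type) [CommRing A] [Group G] : Submodule A (derSub A G) where
  carrier := {d | ∃ a : MonoidAlgebra A G,
    ∀ x, (d : MonoidAlgebra A G →ₗ[A] MonoidAlgebra A G) x = a * x - x * a}
  add_mem' := by
    rintro d e ⟨a, ha⟩ ⟨b, hb⟩
    refine ⟨a + b, fun x => ?_⟩
    simp only [Submodule.coe_add, LinearMap.add_apply, ha x, hb x, add_mul, mul_add]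
    abel
  zero_mem' := ⟨0, fun x => by simp⟩
  smul_mem' := by
    rintro c d ⟨a, ha⟩
    refine ⟨c • a, fun x => ?_⟩
    simp only [Submodule.coe_smul, LinearMap.smul_apply, ha x, smul_sub, smul_mul_assoc,
      mul_smul_comm]

/-!
A derivation `d` of `A[G]` is determined by the coefficients `f g x` of `x g` in `d g`, and the
Leibniz rule says exactly that `f (g h) x = f g x + f h (g⁻¹ x g)`: `f` is a 1-cocycle of `G` with
values in the functions `G → A` under conjugation, and inner derivations give its coboundaries.
That module is induced from the centralizers of the class representatives, so by Shapiro's lemma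
its `H¹` is `⨁_{[u]} H¹(Z(u), A) = ⨁_{[u]} Hom(Z(u), A)`. Concretely: restricting a cocycle to
`Z(u) × {u}` gives the homomorphisms; a family of homomorphisms extends back to a cocycle by
transporting each `x` to its representative; and a cocycle whose restrictions all vanish is a
coboundary. The resulting section splits `Der(A[G])` as `Inn(A[G]) × ∏_{[u]} Hom(Z(u), A)`.
-/

theorem LinearMap.nonempty_equiv_prod_of_comp_eq_id {R M P : Type*} [Ring R] [AddCommGroup M]
    [AddCommGroup P] [Module R M] [Module R P] (N : Submodule R M) (Φ : M →ₗ[R] P) (S : P →ₗ[R] M)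
    (hS : Φ ∘ₗ S = LinearMap.id) (hN : LinearMap.ker Φ = N) : Nonempty (M ≃ₗ[R] N × P) := by
  have hexact : Function.Exact N.subtype Φ := by
    rw [LinearMap.exact_iff, Submodule.range_subtype, hN]
  exact ⟨(hexact.splitSurjectiveEquiv N.injective_subtype ⟨S, hS⟩).1⟩

def IsConjCocycle {G A : Type*} [Group G] [AddCommGroup A] (f : G → G → A) : Prop :=
  ∀ g h x, f (g * h) x = f g x + f h (g⁻¹ * x * g)

namespace IsConjCocycle

variable {G A : Type*} [Group G] [AddCommGroup A] {f : G → G → A}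

theorem apply_one (hf : IsConjCocycle f) (x : G) : f 1 x = 0 := by
  simpa using hf 1 1 x

theorem apply_inv (hf : IsConjCocycle f) (g x : G) : f g⁻¹ (g⁻¹ * x * g) = -f g x := by
  have := hf g g⁻¹ x
  rw [mul_inv_cancel, hf.apply_one] at this
  exact eq_neg_of_add_eq_zero_right this.symm

def restrict (hf : IsConjCocycle f) (u : G) : Additive (Subgroup.centralizer {u}) →+ A where
  toFun h := f (Additive.toMul h : Subgroup.centralizer {u}) u
  map_zero' := hf.apply_one u
  map_add' h₁ h₂ := by
    have hc := Subgroup.mem_centralizer_singleton_iff.mp (Additive.toMul h₁).2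
    have := hf (Additive.toMul h₁ : Subgroup.centralizer {u})
      (Additive.toMul h₂ : Subgroup.centralizer {u}) u
    rwa [mul_assoc, ← hc, inv_mul_cancel_left] at this

end IsConjCocycle

section ConjugacyRepresentatives

variable {G : Type*} [Group G] (rep : ConjClasses G → G) (hrep : ∀ c, ConjClasses.mk (rep c) = c)

theorem ConjClasses.mk_conj (g x : G) : ConjClasses.mk (g⁻¹ * x * g) = ConjClasses.mk x :=
  ConjClasses.mk_eq_mk_iff_isConj.mpr (isConj_iff.mpr ⟨g, by group⟩)

noncomputable def conjugator (x : G) : G :=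
  (isConj_iff.mp (ConjClasses.mk_eq_mk_iff_isConj.mp (hrep (ConjClasses.mk x)))).choose

theorem conjugator_conj_rep (x : G) :
    conjugator rep hrep x * rep (ConjClasses.mk x) * (conjugator rep hrep x)⁻¹ = x :=
  (isConj_iff.mp (ConjClasses.mk_eq_mk_iff_isConj.mp (hrep (ConjClasses.mk x)))).choose_spec

/-- Conjugating `x` back to its representative `u`, the action of `g` on `x` becomes an element
of the centralizer of `u`. -/
noncomputable def centralizerCocycle (g x : G) : G :=
  (conjugator rep hrep x)⁻¹ * g * conjugator rep hrep (g⁻¹ * x * g)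

theorem centralizerCocycle_mem (g x : G) :
    centralizerCocycle rep hrep g x ∈ Subgroup.centralizer {rep (ConjClasses.mk x)} := by
  rw [Subgroup.mem_centralizer_singleton_iff]
  have ht := conjugator_conj_rep rep hrep x
  have hs := conjugator_conj_rep rep hrep (g⁻¹ * x * g)
  rw [ConjClasses.mk_conj] at hs
  set t := conjugator rep hrep x
  set s := conjugator rep hrep (g⁻¹ * x * g)
  set u := rep (ConjClasses.mk x)
  calc t⁻¹ * g * s * u = t⁻¹ * g * (s * u * s⁻¹) * s := by group
    _ = t⁻¹ * x * t * (t⁻¹ * g * s) := by rw [hs]; group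
    _ = u * (t⁻¹ * g * s) := by rw [← ht]; group

theorem centralizerCocycle_mul (g h x : G) :
    centralizerCocycle rep hrep (g * h) x =
      centralizerCocycle rep hrep g x * centralizerCocycle rep hrep h (g⁻¹ * x * g) := by
  simp only [centralizerCocycle, show (g * h)⁻¹ * x * (g * h) = h⁻¹ * (g⁻¹ * x * g) * h by group]
  group

end ConjugacyRepresentatives

section Extension

variable {G A : Type*} [Group G] [AddCommGroup A]
  (rep : ConjClasses G → G) (hrep : ∀ c, ConjClasses.mk (rep c) = c)

theorem centralizerHom_congr (φ : ∀ c : ConjClasses G, Additive (Subgroup.centralizer {rep c}) →+ A)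
    {c c' : ConjClasses G} (e : c = c') {g g' : G} (hg : g ∈ Subgroup.centralizer {rep c})
    (hg' : g' ∈ Subgroup.centralizer {rep c'}) (eg : g = g') :
    φ c (Additive.ofMul ⟨g, hg⟩) = φ c' (Additive.ofMul ⟨g', hg'⟩) := by
  subst e eg; rfl

noncomputable def extendCocycle
    (φ : ∀ c : ConjClasses G, Additive (Subgroup.centralizer {rep c}) →+ A) (g x : G) : A :=
  φ (ConjClasses.mk x)
    (Additive.ofMul ⟨centralizerCocycle rep hrep g x, centralizerCocycle_mem rep hrep g x⟩)

theorem isConjCocycle_extendCocycle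
    (φ : ∀ c : ConjClasses G, Additive (Subgroup.centralizer {rep c}) →+ A) :
    IsConjCocycle (extendCocycle rep hrep φ) := by
  intro g h x
  have hmem : centralizerCocycle rep hrep h (g⁻¹ * x * g) ∈
      Subgroup.centralizer {rep (ConjClasses.mk x)} := by
    simpa only [ConjClasses.mk_conj] using centralizerCocycle_mem rep hrep h (g⁻¹ * x * g)
  have hsplit : (⟨_, centralizerCocycle_mem rep hrep (g * h) x⟩ :
      Subgroup.centralizer {rep (ConjClasses.mk x)}) =
      ⟨_, centralizerCocycle_mem rep hrep g x⟩ * ⟨_, hmem⟩ :=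
    Subtype.ext (centralizerCocycle_mul rep hrep g h x)
  rw [extendCocycle, hsplit, ofMul_mul, map_add]
  exact congrArg _ (centralizerHom_congr rep φ (ConjClasses.mk_conj g x).symm _ _ rfl)

theorem extendCocycle_apply_rep
    (φ : ∀ c : ConjClasses G, Additive (Subgroup.centralizer {rep c}) →+ A) (c : ConjClasses G)
    (g : Subgroup.centralizer {rep c}) :
    extendCocycle rep hrep φ g (rep c) = φ c (Additive.ofMul g) := by
  have hg : (g : G)⁻¹ * rep c * g = rep c := by
    rw [mul_assoc, ← Subgroup.mem_centralizer_singleton_iff.mp g.2, inv_mul_cancel_left]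
  have ht := conjugator_conj_rep rep hrep (rep c)
  rw [hrep, mul_inv_eq_iff_eq_mul] at ht
  set t : Subgroup.centralizer {rep c} :=
    ⟨conjugator rep hrep (rep c), Subgroup.mem_centralizer_singleton_iff.mpr ht⟩
  calc extendCocycle rep hrep φ g (rep c) = φ c (Additive.ofMul (t⁻¹ * g * t)) :=
        centralizerHom_congr rep φ (hrep c) _ _ (by simp only [centralizerCocycle, hg]; rfl)
    _ = φ c (Additive.ofMul g) := by
        rw [ofMul_mul, ofMul_mul, map_add, map_add, ofMul_inv, map_neg]
        abel

theorem IsConjCocycle.eq_coboundary_add_extendCocycle {f : G → G → A} (hf : IsConjCocycle f)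
    (g x : G) :
    f g x = f (conjugator rep hrep x) x - f (conjugator rep hrep (g⁻¹ * x * g)) (g⁻¹ * x * g) +
      extendCocycle rep hrep (fun c => hf.restrict (rep c)) g x := by
  set t := conjugator rep hrep x
  set s := conjugator rep hrep (g⁻¹ * x * g)
  set u := rep (ConjClasses.mk x)
  have ht : t * u * t⁻¹ = x := conjugator_conj_rep rep hrep x
  have hext : extendCocycle rep hrep (fun c => hf.restrict (rep c)) g x = f (t⁻¹ * (g * s)) u := by
    rw [← mul_assoc]; rfl
  have h₁ := hf t⁻¹ (g * s) u
  have h₂ := hf.apply_inv t x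
  rw [inv_inv, ht] at h₁
  rw [show t⁻¹ * x * t = u by rw [← ht]; group] at h₂
  rw [hext, h₁, h₂, hf g s x]
  abel

end Extension

namespace MonoidAlgebra

section ConjCocycle

variable {A G : Type*} [CommRing A] [Group G]

/-- For a linear map `d`, `d g = ∑ₓ conjCocycle d g x • x g`. -/
noncomputable def conjCocycle : (A[G] →ₗ[A] A[G]) →ₗ[A] (G → G → A) where
  toFun d g x := (d (single g 1)).coeff (x * g)
  map_add' _ _ := rfl
  map_smul' _ _ := rfl

theorem conjCocycle_apply (d : A[G] →ₗ[A] A[G]) (g x : G) :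
    conjCocycle d g x = (d (single g 1)).coeff (x * g) :=
  rfl

theorem conjCocycle_injective : Function.Injective (conjCocycle (A := A) (G := G)) := by
  intro d e hde
  refine (basis G A).ext fun g => ?_
  ext w
  simpa [conjCocycle_apply] using congrFun (congrFun hde g) (w * g⁻¹)

theorem conjCocycle_mulLeft_sub_mulRight (b : A[G]) (g x : G) :
    conjCocycle (LinearMap.mulLeft A b - LinearMap.mulRight A b) g x =
      b.coeff x - b.coeff (g⁻¹ * x * g) := by
  simp [conjCocycle_apply, coeff_mul_single_apply, coeff_single_mul_apply, mul_assoc]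

variable [Finite G]

noncomputable def ofConjCocycle : (G → G → A) →ₗ[A] (A[G] →ₗ[A] A[G]) where
  toFun f := (basis G A).constr A fun g =>
    ofCoeff (Finsupp.equivFunOnFinite.symm fun w => f g (w * g⁻¹))
  map_add' f f' := (basis G A).ext fun g => by ext w; simp [-basis_apply]
  map_smul' a f := (basis G A).ext fun g => by ext w; simp [-basis_apply]

theorem ofConjCocycle_single (f : G → G → A) (g w : G) :
    (ofConjCocycle f (single g 1)).coeff w = f g (w * g⁻¹) := by
  rw [← basis_apply]
  simp [ofConjCocycle, -basis_apply]

theorem conjCocycle_ofConjCocycle (f : G → G → A) : conjCocycle (ofConjCocycle f) = f := by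
  ext g x
  simp [conjCocycle_apply, ofConjCocycle_single]

end ConjCocycle

section Derivations

variable {A G : Type} [CommRing A] [Group G]

theorem isConjCocycle_conjCocycle {d : A[G] →ₗ[A] A[G]} (hd : d ∈ derSub A G) :
    IsConjCocycle (conjCocycle d) := by
  intro g h x
  have hd' : d (single g 1 * single h 1) =
      d (single g 1) * single h 1 + single g 1 * d (single h 1) := hd _ _
  rw [single_mul_single, one_mul] at hd'
  simp only [conjCocycle_apply, hd', coeff_add, Finsupp.add_apply, coeff_mul_single_apply,
    coeff_single_mul_apply, mul_assoc, mul_inv_cancel, mul_one, one_mul]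

theorem mem_derSub_of_single {d : A[G] →ₗ[A] A[G]}
    (hd : ∀ g h : G, d (single g 1 * single h 1) =
      d (single g 1) * single h 1 + single g 1 * d (single h 1)) :
    d ∈ derSub A G := by
  have : (LinearMap.mul A A[G]).compr₂ d = (LinearMap.mul A A[G]).compl₁₂ d LinearMap.id +
      (LinearMap.mul A A[G]).compl₁₂ LinearMap.id d :=
    LinearMap.ext_basis (basis G A) (basis G A) fun g h => by simpa using hd g h
  exact fun x y => by simpa using LinearMap.congr_fun₂ this x y

theorem ofConjCocycle_mem_derSub [Finite G] {f : G → G → A} (hf : IsConjCocycle f) :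
    ofConjCocycle f ∈ derSub A G := by
  refine mem_derSub_of_single fun g h => ?_
  ext w
  simp only [single_mul_single, one_mul, coeff_add, Finsupp.add_apply, coeff_mul_single_apply,
    coeff_single_mul_apply, ofConjCocycle_single, mul_one]
  rw [show w * (g * h)⁻¹ = g * (g⁻¹ * w * h⁻¹) * g⁻¹ by group, hf]
  group

end Derivations

end MonoidAlgebra

section Decomposition

variable {A G : Type} [CommRing A] [Group G] (rep : ConjClasses G → G)

noncomputable def restrictToCentralizers :
    derSub A G →ₗ[A] ∀ c : ConjClasses G, Additive (Subgroup.centralizer {rep c}) →+ A where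
  toFun d c := (isConjCocycle_conjCocycle d.2).restrict (rep c)
  map_add' _ _ := rfl
  map_smul' _ _ := rfl

theorem innSub_le_ker_restrictToCentralizers :
    innSub A G ≤ LinearMap.ker (restrictToCentralizers (A := A) rep) := by
  rintro d ⟨b, hb⟩
  have hd : (d : A[G] →ₗ[A] A[G]) = LinearMap.mulLeft A b - LinearMap.mulRight A b :=
    LinearMap.ext hb
  ext c g
  have hg : (g : G)⁻¹ * rep c * g = rep c := by
    rw [mul_assoc, ← Subgroup.mem_centralizer_singleton_iff.mp g.2, inv_mul_cancel_left]
  show conjCocycle (d : A[G] →ₗ[A] A[G]) g (rep c) = 0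
  rw [hd, conjCocycle_mulLeft_sub_mulRight, hg, sub_self]

theorem ker_restrictToCentralizers_le_innSub [Finite G] (hrep : ∀ c, ConjClasses.mk (rep c) = c) :
    LinearMap.ker (restrictToCentralizers (A := A) rep) ≤ innSub A G := by
  intro d hd
  have hf := isConjCocycle_conjCocycle d.2
  set b : A[G] := ofCoeff (Finsupp.equivFunOnFinite.symm fun x =>
    conjCocycle (d : A[G] →ₗ[A] A[G]) (conjugator rep hrep x) x)
  have hzero : (fun c => hf.restrict (rep c)) = 0 := hd
  have hcoc : conjCocycle (d : A[G] →ₗ[A] A[G]) =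
      conjCocycle (LinearMap.mulLeft A b - LinearMap.mulRight A b) := by
    ext g x
    rw [hf.eq_coboundary_add_extendCocycle rep hrep, hzero, conjCocycle_mulLeft_sub_mulRight]
    simp [b, extendCocycle]
  exact ⟨b, fun z => congrArg (· z) (conjCocycle_injective hcoc)⟩

variable [Finite G] (hrep : ∀ c, ConjClasses.mk (rep c) = c)

noncomputable def derivationOfCentralizerHoms :
    (∀ c : ConjClasses G, Additive (Subgroup.centralizer {rep c}) →+ A) →ₗ[A] derSub A G where
  toFun φ := ⟨ofConjCocycle (extendCocycle rep hrep φ),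
    ofConjCocycle_mem_derSub (isConjCocycle_extendCocycle rep hrep φ)⟩
  map_add' φ _ := Subtype.ext (map_add ofConjCocycle (extendCocycle rep hrep φ) _)
  map_smul' a φ := Subtype.ext (map_smul ofConjCocycle a (extendCocycle rep hrep φ))

theorem restrictToCentralizers_comp_derivationOfCentralizerHoms :
    restrictToCentralizers rep ∘ₗ derivationOfCentralizerHoms (A := A) rep hrep = LinearMap.id := by
  ext φ c g
  show conjCocycle (ofConjCocycle (extendCocycle rep hrep φ)) g (rep c) = φ c g
  rw [conjCocycle_ofConjCocycle, extendCocycle_apply_rep]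
  rfl

end Decomposition

theorem der_decomposition_of_finite_group
    (A G : Type) [CommRing A] [Group G] [Finite G]
    (rep : ConjClasses G → G) (hrep : ∀ c, ConjClasses.mk (rep c) = c) :
    Nonempty ((derSub A G) ≃ₗ[A]
      (innSub A G) ×
        (DirectSum (ConjClasses G)
          fun c => (Additive (Subgroup.centralizer {rep c} : Subgroup G) →+ A))) := by
  have hsec := restrictToCentralizers_comp_derivationOfCentralizerHoms (A := A) rep hrep
  have hker := (ker_restrictToCentralizers_le_innSub (A := A) rep hrep).antisymm
      (innSub_le_ker_restrictToCentralizers (A := A) rep)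
  obtain ⟨e⟩ := LinearMap.nonempty_equiv_prod_of_comp_eq_id (M := derSub A G)
    (innSub A G) _ _ hsec hker
  have := Fintype.ofFinite (ConjClasses G)
  exact ⟨e.trans ((LinearEquiv.refl A _).prodCongr (DirectSum.linearEquivFunOnFintype A _ _).symm)⟩
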